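/- For every natural number n≥3, the cycle C_n is a 50% max-tolerance graph. -/

import Mathlib

variable {V : Type*}

/-- A max-tolerance representation: each vertex `u` gets an interval `[a u, b u]` and a
positive tolerance `t u`, and distinct `u, v` are adjacent iff the length of
`[a u, b u] ∩ [a v, b v]` (zero if empty) is at least `max (t u) (t v)`. -/
def IsMaxTolRep (G : SimpleGraph V) (a b t : V → ℝ) : Prop :=
  (∀ u, a u ≤ b u) ∧ (∀ u, 0 < t u) ∧
    ∀ u v : V, u ≠ v →
      (G.Adj u v ↔ max (t u) (t v) ≤ max (min (b u) (b v) - max (a u) (a v)) 0)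

/-- A 50% max-tolerance graph: a max-tolerance representation in which each tolerance is
half the length of the corresponding interval. -/
def IsHalfMaxTolG (G : SimpleGraph V) : Prop :=
  ∃ a b : V → ℝ, IsMaxTolRep G a b (fun u => (b u - a u) / 2)

/-- The cycle `C_n` on vertices `0, …, n-1`, with edges exactly between cyclically
consecutive vertices. -/
def cycleG (n : ℕ) : SimpleGraph (Fin n) where
  Adj i j := i ≠ j ∧ (((i : ℕ) + 1) % n = (j : ℕ) ∨ ((j : ℕ) + 1) % n = (i : ℕ))
  symm := ⟨fun i j h => ⟨h.1.symm, h.2.symm⟩⟩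
  loopless := ⟨fun i h => h.1 rfl⟩

/-!
For 50% tolerances, the intervals with centres `x, y` and half-lengths `r, s` are adjacent iff
`r ≤ 2 s`, `s ≤ 2 r` and `|x - y| ≤ min r s`. For `n ≥ 5`, vertex `n - 1` is a hub of
half-length `2` centred at `0`, and the path `0, …, n - 2` is split into two arms whose lengths
differ by at most one. A vertex `k` steps from the hub end of its arm gets half-length `(2/3)^k`,
so vertices two steps apart fail the ratio test. The left arm starts at `-1`, the right arm is its
mirror image starting at `1`, and both advance by the fraction `β/2` of the largest step that
keeps consecutive vertices adjacent, with `β ∈ (1, 2]` chosen so that the two arm ends are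
exactly adjacent; every other pair across the arms is then too far apart. The cycles `C_3` and
`C_4` get explicit representations.
-/

/-- The 50% intervals `[x - r, x + r]` and `[y - s, y + s]` are adjacent, see
`max_le_overlap_iff_halfTolAdj`. -/
def HalfTolAdj (x r y s : ℝ) : Prop :=
  r ≤ 2 * s ∧ s ≤ 2 * r ∧ |x - y| ≤ min r s

theorem halfTolAdj_comm {x r y s : ℝ} : HalfTolAdj x r y s ↔ HalfTolAdj y s x r := by
  simp only [HalfTolAdj, abs_sub_comm x y, min_comm r s]
  tauto

theorem halfTolAdj_neg_iff {x r y s : ℝ} : HalfTolAdj (-x) r (-y) s ↔ HalfTolAdj x r y s := by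
  rw [HalfTolAdj, HalfTolAdj, neg_sub_neg, abs_sub_comm]

theorem max_le_overlap_iff_halfTolAdj {x r y s : ℝ} (hr : 0 < r) :
    max r s ≤ max (min (x + r) (y + s) - max (x - r) (y - s)) 0 ↔ HalfTolAdj x r y s := by
  rw [le_max_iff, or_iff_left (lt_max_of_lt_left hr).not_ge, max_le_iff]
  simp only [HalfTolAdj, le_sub_iff_add_le, le_min_iff, add_max, max_le_iff, abs_le]
  constructor
  · rintro ⟨⟨⟨h1, h2⟩, h3, h4⟩, ⟨h5, h6⟩, h7, h8⟩
    refine ⟨?_, ?_, ⟨?_, ?_⟩, ?_, ?_⟩ <;> linarith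
  · rintro ⟨h1, h2, ⟨h3, h4⟩, h5, h6⟩
    refine ⟨⟨⟨?_, ?_⟩, ?_, ?_⟩, ⟨?_, ?_⟩, ?_, ?_⟩ <;> linarith

theorem isHalfMaxTolG_of_halfTolAdj (G : SimpleGraph V) (m r : V → ℝ) (hr : ∀ u, 0 < r u)
    (hadj : ∀ u v, u ≠ v → (G.Adj u v ↔ HalfTolAdj (m u) (r u) (m v) (r v))) :
    IsHalfMaxTolG G := by
  refine ⟨fun u => m u - r u, fun u => m u + r u, fun u => by linarith [hr u],
    fun u => by simpa using hr u, fun u v huv => ?_⟩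
  simp only [add_sub_sub_cancel, add_self_div_two]
  rw [hadj u v huv, max_le_overlap_iff_halfTolAdj (hr u)]

theorem cycleG_adj_iff_of_lt {n : ℕ} {u v : Fin n} (huv : u < v) :
    (cycleG n).Adj u v ↔ (v : ℕ) = u + 1 ∨ ((u : ℕ) = 0 ∧ (v : ℕ) = n - 1) := by
  have hv := v.isLt
  have hu : (u : ℕ) < v := huv
  simp only [cycleG, ne_of_lt huv, ne_eq, not_false_eq_true, true_and]
  rw [Nat.mod_eq_of_lt (by omega : (u : ℕ) + 1 < n)]
  rcases (by omega : (v : ℕ) + 1 < n ∨ (v : ℕ) + 1 = n) with h | h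
  · rw [Nat.mod_eq_of_lt h]; omega
  · rw [h, Nat.mod_self]; omega

theorem isHalfMaxTolG_cycleG_three : IsHalfMaxTolG (cycleG 3) := by
  refine isHalfMaxTolG_of_halfTolAdj _ 0 1 (fun _ => one_pos) fun u v huv => ?_
  fin_cases u <;> fin_cases v <;> simp_all [HalfTolAdj, cycleG]

theorem isHalfMaxTolG_cycleG_four : IsHalfMaxTolG (cycleG 4) := by
  refine isHalfMaxTolG_of_halfTolAdj _ ![-4, 0, 4, 0] ![6, 4, 6, 9]
    (fun u => by fin_cases u <;> norm_num) fun u v huv => ?_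
  fin_cases u <;> fin_cases v <;> simp_all [HalfTolAdj, cycleG] <;>
    norm_num [abs_of_nonneg]

theorem two_mul_two_thirds_pow_lt {j k : ℕ} (h : j + 2 ≤ k) :
    2 * (2/3 : ℝ) ^ k < (2/3) ^ j := by
  have hk : (2/3 : ℝ) ^ k ≤ (2/3) ^ (j + 2) :=
    pow_le_pow_of_le_one (by norm_num) (by norm_num) h
  have hj : (0 : ℝ) < (2/3) ^ j := by positivity
  rw [pow_add] at hk
  linarith

theorem halfTolAdj_zero_two_iff {x : ℝ} {k : ℕ} (hx : k = 0 → |x| ≤ 1) :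
    HalfTolAdj 0 2 x ((2/3) ^ k) ↔ k = 0 := by
  constructor
  · rintro ⟨hratio, -, -⟩
    by_contra hk
    have : (2/3 : ℝ) ^ k ≤ 2/3 := pow_le_of_le_one (by norm_num) (by norm_num) hk
    linarith
  · rintro rfl
    norm_num [HalfTolAdj]
    exact hx rfl

noncomputable def armCenter (β : ℝ) (k : ℕ) : ℝ := -1 + β * (1 - (2/3) ^ k)

theorem halfTolAdj_armCenter_iff {β : ℝ} (hβ0 : 0 ≤ β) (hβ2 : β ≤ 2) {k l : ℕ} (hkl : k < l) :
    HalfTolAdj (armCenter β k) ((2/3) ^ k) (armCenter β l) ((2/3) ^ l) ↔ l = k + 1 := by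
  constructor
  · rintro ⟨hratio, -, -⟩
    by_contra hne
    exact (two_mul_two_thirds_pow_lt (by omega)).not_ge hratio
  · rintro rfl
    have hk : (0 : ℝ) < (2/3) ^ k := by positivity
    have hstep : armCenter β k - armCenter β (k + 1) = -(β * (2/3) ^ k / 3) := by
      rw [armCenter, armCenter, pow_succ]; ring
    rw [HalfTolAdj, hstep, abs_neg, abs_of_nonneg (by positivity), pow_succ,
      min_eq_right (by linarith)]
    refine ⟨by linarith, by linarith, by nlinarith⟩

theorem halfTolAdj_armCenter_neg_iff {β : ℝ} (hβ : 1 < β) {L R : ℕ} (hRL : R ≤ L)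
    (hLR : L ≤ R + 1) (hjunction : 2 - β * (2 - (2/3) ^ L - (2/3) ^ R) = (2/3) ^ L) {j k : ℕ}
    (hj : j ≤ L) (hk : k ≤ R) :
    HalfTolAdj (armCenter β j) ((2/3) ^ j) (-armCenter β k) ((2/3) ^ k) ↔ j = L ∧ k = R := by
  have anti {a b : ℕ} (h : a ≤ b) : (2/3 : ℝ) ^ b ≤ (2/3) ^ a :=
    pow_le_pow_of_le_one (by norm_num) (by norm_num) h
  have hdist : |armCenter β j - -armCenter β k| =
      (2/3) ^ L + β * ((2/3) ^ j - (2/3) ^ L + ((2/3) ^ k - (2/3) ^ R)) := by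
    rw [abs_sub_comm, armCenter, armCenter, abs_of_nonneg (by
      nlinarith [anti hj, anti hk, pow_pos (by norm_num : (0 : ℝ) < 2/3) L])]
    linear_combination hjunction
  rw [HalfTolAdj, hdist]
  constructor
  · rintro ⟨-, -, hclose⟩
    by_contra hne
    have hstrict : (2/3 : ℝ) ^ L < (2/3) ^ j ∨ (2/3 : ℝ) ^ R < (2/3) ^ k := by
      rcases Nat.lt_or_ge j L with h | h
      · exact Or.inl (pow_lt_pow_right_of_lt_one₀ (by norm_num) (by norm_num) h)
      · exact Or.inr (pow_lt_pow_right_of_lt_one₀ (by norm_num) (by norm_num) (by omega))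
    have := min_le_left ((2/3 : ℝ) ^ j) ((2/3) ^ k)
    rcases hstrict with h | h <;> nlinarith [anti hj, anti hk]
  · rintro ⟨rfl, rfl⟩
    have hsucc : (2/3 : ℝ) ^ (k + 1) ≤ (2/3) ^ j := anti hLR
    rw [pow_succ] at hsucc
    have hj0 : (0 : ℝ) < (2/3) ^ j := by positivity
    have hk0 : (0 : ℝ) < (2/3) ^ k := by positivity
    refine ⟨by linarith [anti hRL], by linarith, by simp [min_eq_left (anti hRL)]⟩

theorem exists_junction_scale {L R : ℕ} (hL : 1 ≤ L) (hR : 1 ≤ R) :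
    ∃ β : ℝ, 1 < β ∧ β ≤ 2 ∧ 2 - β * (2 - (2/3) ^ L - (2/3) ^ R) = (2/3) ^ L := by
  have hqL : (2/3 : ℝ) ^ L ≤ 2/3 := pow_le_of_le_one (by norm_num) (by norm_num) (by omega)
  have hqR : (2/3 : ℝ) ^ R ≤ 2/3 := pow_le_of_le_one (by norm_num) (by norm_num) (by omega)
  have hR0 : (0 : ℝ) < (2/3) ^ R := by positivity
  have hden : (0 : ℝ) < 2 - (2/3) ^ L - (2/3) ^ R := by linarith
  refine ⟨(2 - (2/3) ^ L) / (2 - (2/3) ^ L - (2/3) ^ R), ?_, ?_, ?_⟩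
  · rw [one_lt_div hden]; linarith
  · rw [div_le_iff₀ hden]; linarith
  · rw [div_mul_cancel₀ _ hden.ne']; ring

/-- Vertex `L + R + 2` is the hub; `0, …, L` is the left arm and `L + 1, …, L + R + 1` the
mirrored right arm. -/
noncomputable def cycleCenter (β : ℝ) (L R i : ℕ) : ℝ :=
  if i ≤ L then armCenter β i
  else if i ≤ L + R + 1 then -armCenter β (L + R + 1 - i)
  else 0

noncomputable def cycleRadius (L R i : ℕ) : ℝ :=
  if i ≤ L then (2/3) ^ i
  else if i ≤ L + R + 1 then (2/3) ^ (L + R + 1 - i)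
  else 2

theorem cycleRadius_pos (L R i : ℕ) : 0 < cycleRadius L R i := by
  unfold cycleRadius
  split_ifs <;> positivity

theorem halfTolAdj_cycle_iff {β : ℝ} (hβ1 : 1 < β) (hβ2 : β ≤ 2) {L R : ℕ} (hRL : R ≤ L)
    (hLR : L ≤ R + 1) (hjunction : 2 - β * (2 - (2/3) ^ L - (2/3) ^ R) = (2/3) ^ L)
    {i j : ℕ} (hij : i < j) (hj : j ≤ L + R + 2) :
    HalfTolAdj (cycleCenter β L R i) (cycleRadius L R i) (cycleCenter β L R j)
        (cycleRadius L R j) ↔ j = i + 1 ∨ (i = 0 ∧ j = L + R + 2) := by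
  rcases (by omega : j = L + R + 2 ∨ j ≤ L ∨ (i ≤ L ∧ L < j ∧ j ≤ L + R + 1) ∨
      (L < i ∧ j ≤ L + R + 1)) with rfl | hjL | ⟨hiL, hLj, hjR⟩ | ⟨hLi, hjR⟩
  · have hhubL : ¬L + R + 2 ≤ L := by omega
    have hhubR : ¬L + R + 2 ≤ L + R + 1 := by omega
    rw [halfTolAdj_comm]
    by_cases hiL : i ≤ L
    · simp only [cycleCenter, cycleRadius, hiL, hhubL, hhubR, if_true, if_false, and_true]
      rw [halfTolAdj_zero_two_iff (by rintro rfl; simp [armCenter])]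
      omega
    · simp only [cycleCenter, cycleRadius, hiL, hhubL, hhubR, (by omega : i ≤ L + R + 1),
        if_true, if_false, and_true]
      rw [halfTolAdj_zero_two_iff (by intro h; simp [h, armCenter])]
      omega
  · simp only [cycleCenter, cycleRadius, (by omega : i ≤ L), hjL, if_true]
    rw [halfTolAdj_armCenter_iff (by linarith) hβ2 hij]
    omega
  · have hjL : ¬j ≤ L := by omega
    simp only [cycleCenter, cycleRadius, hiL, if_true, hjR, hjL, if_false]
    rw [halfTolAdj_armCenter_neg_iff hβ1 hRL hLR hjunction hiL (by omega)]
    omega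
  · have hiL : ¬i ≤ L := by omega
    have hjL : ¬j ≤ L := by omega
    simp only [cycleCenter, cycleRadius, hiL, hjL, (by omega : i ≤ L + R + 1), hjR, if_true,
      if_false]
    rw [halfTolAdj_comm, halfTolAdj_neg_iff,
      halfTolAdj_armCenter_iff (by linarith) hβ2 (by omega)]
    omega

theorem isHalfMaxTolG_cycleG_add_three {L R : ℕ} (hR : 1 ≤ R) (hRL : R ≤ L)
    (hLR : L ≤ R + 1) : IsHalfMaxTolG (cycleG (L + R + 3)) := by
  obtain ⟨β, hβ1, hβ2, hjunction⟩ := exists_junction_scale (hR.trans hRL) hR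
  refine isHalfMaxTolG_of_halfTolAdj _ (fun v => cycleCenter β L R v)
    (fun v => cycleRadius L R v) (fun v => cycleRadius_pos L R v) fun u v huv => ?_
  rcases huv.lt_or_gt with h | h
  · rw [cycleG_adj_iff_of_lt h, halfTolAdj_cycle_iff hβ1 hβ2 hRL hLR hjunction h (by omega)]
    rfl
  · rw [SimpleGraph.adj_comm, cycleG_adj_iff_of_lt h, halfTolAdj_comm,
      halfTolAdj_cycle_iff hβ1 hβ2 hRL hLR hjunction h (by omega)]
    rfl

/-- For every `n ≥ 3`, the cycle `C_n` is a 50% max-tolerance graph. -/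
theorem cycle_is_half_maxtol (n : ℕ) (hn : 3 ≤ n) : IsHalfMaxTolG (cycleG n) := by
  rcases (by omega : n = 3 ∨ n = 4 ∨ 5 ≤ n) with rfl | rfl | h5
  · exact isHalfMaxTolG_cycleG_three
  · exact isHalfMaxTolG_cycleG_four
  · obtain ⟨L, R, hR, hRL, hLR, rfl⟩ : ∃ L R, 1 ≤ R ∧ R ≤ L ∧ L ≤ R + 1 ∧ n = L + R + 3 :=
      ⟨n - 3 - (n - 3) / 2, (n - 3) / 2, by omega, by omega, by omega, by omega⟩
    exact isHalfMaxTolG_cycleG_add_three hR hRL hLR
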